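/- arXiv:1903.06762 — 2 statements merged into one kernel-verified Lean document; each statement's English description precedes it below -/
import Mathlib

section
/- Fix β ∈ (0,1), N ∈ ℕ, and k ∈ {0, …, N−1}. The polynomial equation in t: (β/(N+1)) · Σ_{l=k}^{N} C(l,k) t^{l−k} − C(N,k) t^{N−k} = 0 has exactly one solution in the open interval (0,1). -/
/-!
Substituting `s = 1/t` and dividing by `t ^ (N - k)` turns the equation into
`P s = C(N,k)` with `P s = β/(N+1) · ∑_{l=k}^{N} C(l,k) s^(N-l)` and `s ∈ (1,∞)`.
All coefficients of `P` are nonnegative and the top one, `C(k,k) = 1`, sits in degree `N - k ≥ 1`,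
so `P` is strictly increasing on `[0,∞)` and unbounded, while the hockey-stick identity gives
`P 1 = β/(N+1) · C(N+1,k+1) = β/(k+1) · C(N,k) < C(N,k)`. Hence `P` crosses the level `C(N,k)`
exactly once on `(1,∞)`.
-/

open Filter Finset

section SumMulPow

variable {ι : Type*} {s : Finset ι} {c : ι → ℝ} {n : ι → ℕ} {j : ι}

theorem strictMonoOn_sum_mul_pow (hc : ∀ i ∈ s, 0 ≤ c i) (hj : j ∈ s) (hcj : 0 < c j)
    (hnj : n j ≠ 0) : StrictMonoOn (fun x : ℝ => ∑ i ∈ s, c i * x ^ n i) (Set.Ici 0) := by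
  intro x hx y _ hxy
  refine sum_lt_sum (fun i hi => ?_) ⟨j, hj, ?_⟩
  · exact mul_le_mul_of_nonneg_left (pow_le_pow_left₀ hx hxy.le _) (hc i hi)
  · exact mul_lt_mul_of_pos_left (pow_lt_pow_left₀ hxy hx hnj) hcj

theorem tendsto_sum_mul_pow_atTop (hc : ∀ i ∈ s, 0 ≤ c i) (hj : j ∈ s) (hcj : 0 < c j)
    (hnj : n j ≠ 0) : Tendsto (fun x : ℝ => ∑ i ∈ s, c i * x ^ n i) atTop atTop := by
  refine tendsto_atTop_mono' atTop ?_ ((tendsto_pow_atTop hnj).const_mul_atTop hcj)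
  filter_upwards [eventually_ge_atTop 0] with x hx
  exact single_le_sum (f := fun i => c i * x ^ n i)
    (fun i hi => mul_nonneg (hc i hi) (pow_nonneg hx _)) hj

end SumMulPow

theorem existsUnique_mem_Ioi_eq_of_strictMonoOn {f : ℝ → ℝ} {a y : ℝ}
    (hmono : StrictMonoOn f (Set.Ici a)) (hcont : ContinuousOn f (Set.Ici a)) (ha : f a < y)
    (htop : Tendsto f atTop atTop) : ∃! x, x ∈ Set.Ioi a ∧ f x = y := by
  obtain ⟨b, hyb, hab⟩ := ((htop.eventually_ge_atTop y).and (eventually_ge_atTop a)).exists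
  obtain ⟨x, hx, hfx⟩ :=
    intermediate_value_Icc hab (hcont.mono Set.Icc_subset_Ici_self) ⟨ha.le, hyb⟩
  have hax : a < x := hx.1.lt_of_ne (by rintro rfl; exact ha.ne hfx)
  refine ⟨x, ⟨hax, hfx⟩, fun z ⟨hz, hfz⟩ => ?_⟩
  exact hmono.injOn (Set.mem_Ici.mpr hz.le) hx.1 (hfz.trans hfx.symm)

theorem sum_Icc_mul_pow_sub_eq_pow_mul_sum_inv {K : Type*} [Field K] (c : ℕ → K) (k N : ℕ)
    {t : K} (ht : t ≠ 0) : ∑ l ∈ Icc k N, c l * t ^ (l - k) =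
      t ^ (N - k) * ∑ l ∈ Icc k N, c l * t⁻¹ ^ (N - l) := by
  rw [mul_sum]
  refine sum_congr rfl fun l hl => ?_
  obtain ⟨hkl, hlN⟩ := mem_Icc.mp hl
  rw [inv_pow, mul_left_comm, ← pow_sub₀ t ht (show N - l ≤ N - k by omega),
    show N - k - (N - l) = l - k by omega]

theorem div_mul_choose_succ_lt_choose {β : ℝ} {N k : ℕ} (hkN : k ≤ N) (hβ : β < k + 1) :
    β / (N + 1) * ((N + 1).choose (k + 1) : ℝ) < N.choose k := by
  have hpascal : ((N : ℝ) + 1) * N.choose k = (N + 1).choose (k + 1) * (k + 1) := by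
    exact_mod_cast Nat.add_one_mul_choose_eq N k
  have hpos : (0 : ℝ) < (N + 1).choose (k + 1) := by
    exact_mod_cast Nat.choose_pos (by omega : k + 1 ≤ N + 1)
  rw [div_mul_eq_mul_div, div_lt_iff₀ (by positivity), mul_comm (N.choose k : ℝ), hpascal]
  exact mul_lt_mul_of_pos_right hβ hpos |>.trans_eq (mul_comm _ _)

theorem scenario_polynomial_unique_root (β : ℝ) (hβ : β ∈ Set.Ioo (0 : ℝ) 1)
    (N k : ℕ) (hk : k < N) :
    ∃! t : ℝ, t ∈ Set.Ioo (0 : ℝ) 1 ∧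
      (β / (N + 1)) * ∑ l ∈ Finset.Icc k N, (l.choose k : ℝ) * t ^ (l - k)
        - (N.choose k : ℝ) * t ^ (N - k) = 0 := by
  obtain ⟨hβ0, hβ1⟩ := hβ
  set P : ℝ → ℝ := fun s => ∑ l ∈ Icc k N, β / (N + 1) * l.choose k * s ^ (N - l)
  have hcoef : ∀ l ∈ Icc k N, 0 ≤ β / (N + 1) * l.choose k := fun l _ => by positivity
  have hk_mem : k ∈ Icc k N := mem_Icc.mpr ⟨le_rfl, hk.le⟩
  have hcoef_k : 0 < β / (N + 1) * k.choose k := by rw [Nat.choose_self]; positivity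
  have hdeg : N - k ≠ 0 := by omega
  have hP1 : P 1 < N.choose k := by
    simpa only [P, one_pow, mul_one, ← mul_sum, ← Nat.cast_sum, Nat.sum_Icc_choose]
      using div_mul_choose_succ_lt_choose hk.le (by linarith : β < k + 1)
  have hPcont : Continuous P := continuous_finsetSum _ fun l _ => by fun_prop
  have hPmono : StrictMonoOn P (Set.Ici 1) :=
    (strictMonoOn_sum_mul_pow hcoef hk_mem hcoef_k hdeg).mono (Set.Ici_subset_Ici.mpr zero_le_one)
  have hroot := existsUnique_mem_Ioi_eq_of_strictMonoOn hPmono hPcont.continuousOn hP1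
    (tendsto_sum_mul_pow_atTop hcoef hk_mem hcoef_k hdeg)
  refine (Equiv.inv ℝ).existsUnique_congr (fun t => ?_) |>.mpr hroot
  rw [Equiv.inv_apply, Set.mem_Ioi, one_lt_inv_iff₀]
  refine and_congr_right fun ht => ?_
  simp_rw [mul_sum, ← mul_assoc]
  rw [sum_Icc_mul_pow_sub_eq_pow_mul_sum_inv _ k N ht.1.ne', mul_comm _ (t ^ _), ← mul_sub,
    mul_eq_zero, or_iff_right (pow_ne_zero _ ht.1.ne'), sub_eq_zero]
end

section
/- In the demand-response game with M players, strategy x^j ∈ ℝ^T_{≥0}, aggregate σ(x) = Σ_{j=1}^M x^j, and costs J^j(x) = Σ_{t=1}^T α_t σ_t(x) x^j_t with α_t > 0, the pseudo-gradient operator F(x) stacking ∇_{x^j} J^j(x) = A σ(x) + A x^j (where A = diag(α_1, …, α_T)) is strongly monotone on ℝ^{MT}. -/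
open RealInnerProductSpace

/-!
Writing `d = x - y`, linearity gives `F x - F y = F d`, and summing the players' inner products
coordinate by coordinate yields `∑ₜ αₜ ((∑ⱼ dⱼₜ)² + ∑ⱼ dⱼₜ²)`. Dropping the aggregate square leaves
at least `minₜ αₜ · ∑ⱼ ‖dⱼ‖²`.
-/

theorem exists_pos_le_of_forall_pos {κ : Type*} [Finite κ] (α : κ → ℝ) (hα : ∀ t, 0 < α t) :
    ∃ c > 0, ∀ t, c ≤ α t := by
  cases isEmpty_or_nonempty κ with
  | inl _ => exact ⟨1, one_pos, isEmptyElim⟩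
  | inr _ =>
    obtain ⟨t₀, ht₀⟩ := Finite.exists_min α
    exact ⟨α t₀, hα t₀, ht₀⟩

section DemandResponse

variable {ι κ : Type*} [Fintype ι]

/-- The pseudo-gradient of the demand-response game, `F(x)ʲ = A σ(x) + A xʲ` with `A = diag α`. -/
noncomputable def demandResponseGradient (α : κ → ℝ) (x : ι → EuclideanSpace ℝ κ) (j : ι) :
    EuclideanSpace ℝ κ :=
  WithLp.toLp 2 fun t => α t * (∑ i, x i t) + α t * x j t

theorem demandResponseGradient_sub (α : κ → ℝ) (x y : ι → EuclideanSpace ℝ κ) (j : ι) :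
    demandResponseGradient α x j - demandResponseGradient α y j =
      demandResponseGradient α (x - y) j := by
  ext t
  simp only [demandResponseGradient, PiLp.sub_apply, Pi.sub_apply, Finset.sum_sub_distrib]
  ring

theorem sum_inner_demandResponseGradient_self [Fintype κ] (α : κ → ℝ) (d : ι → EuclideanSpace ℝ κ) :
    ∑ j, ⟪demandResponseGradient α d j, d j⟫ =
      ∑ t, α t * ((∑ j, d j t) ^ 2 + ∑ j, d j t ^ 2) := by
  simp only [demandResponseGradient, PiLp.inner_apply, RCLike.inner_apply, Real.ringHom_apply]
  rw [Finset.sum_comm]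
  refine Finset.sum_congr rfl fun t _ => ?_
  set σ := ∑ i, d i t
  calc ∑ j, d j t * (α t * σ + α t * d j t)
      = ∑ j, (α t * σ * d j t + α t * d j t ^ 2) := Finset.sum_congr rfl fun j _ => by ring
    _ = α t * (σ ^ 2 + ∑ j, d j t ^ 2) := by
      rw [Finset.sum_add_distrib, ← Finset.mul_sum, ← Finset.mul_sum]
      ring

theorem sum_norm_sq_eq_sum_sum_sq [Fintype κ] (d : ι → EuclideanSpace ℝ κ) :
    ∑ j, ‖d j‖ ^ 2 = ∑ t, ∑ j, d j t ^ 2 := by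
  simp only [EuclideanSpace.norm_sq_eq, Real.norm_eq_abs, sq_abs]
  exact Finset.sum_comm

theorem le_sum_inner_demandResponseGradient_self [Fintype κ] {α : κ → ℝ} {c : ℝ} (hc : 0 ≤ c)
    (hcα : ∀ t, c ≤ α t) (d : ι → EuclideanSpace ℝ κ) :
    c * ∑ j, ‖d j‖ ^ 2 ≤ ∑ j, ⟪demandResponseGradient α d j, d j⟫ := by
  rw [sum_inner_demandResponseGradient_self, sum_norm_sq_eq_sum_sum_sq, Finset.mul_sum]
  refine Finset.sum_le_sum fun t _ => ?_
  have hαt : 0 ≤ α t := hc.trans (hcα t)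
  have hsq : 0 ≤ ∑ j, d j t ^ 2 := Finset.sum_nonneg fun j _ => sq_nonneg _
  calc c * ∑ j, d j t ^ 2 ≤ α t * ∑ j, d j t ^ 2 := mul_le_mul_of_nonneg_right (hcα t) hsq
    _ ≤ α t * ((∑ j, d j t) ^ 2 + ∑ j, d j t ^ 2) := by
      gcongr
      exact le_add_of_nonneg_left (sq_nonneg _)

end DemandResponse

/-- Strong monotonicity of the pseudo-gradient operator of the demand-response
aggregative game: player j has gradient `t ↦ α t * σ(x) t + α t * x j t`. -/
theorem demand_response_operator_strongly_monotone {M T : ℕ}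
    (α : Fin T → ℝ) (hα : ∀ t, 0 < α t)
    (F : (Fin M → EuclideanSpace ℝ (Fin T)) → Fin M → EuclideanSpace ℝ (Fin T))
    (hF : ∀ x j t, F x j t = α t * (∑ i, x i t) + α t * x j t) :
    ∃ c > 0, ∀ x y : Fin M → EuclideanSpace ℝ (Fin T),
      c * ∑ j, ‖x j - y j‖ ^ 2 ≤ ∑ j, ⟪F x j - F y j, x j - y j⟫ := by
  obtain rfl : F = demandResponseGradient α := by
    funext x j
    ext t
    exact hF x j t
  obtain ⟨c, hc, hcα⟩ := exists_pos_le_of_forall_pos α hα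
  refine ⟨c, hc, fun x y => ?_⟩
  simpa only [demandResponseGradient_sub, Pi.sub_apply] using
    le_sum_inner_demandResponseGradient_self hc.le hcα (x - y)
end
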